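/- Let γ₁, γ₂ > 0 with γ₁ ≠ γ₂, let κ > 0 and t ≥ 1, and let μ ∈ (0, 1) satisfy min{μ, 1 − μ} ≥ κ/t. Then D(f(μ, γ₁) ‖ f(μ, γ₂)) ≥ c₀ · κ/t, where c₀ = (1/2) · (√γ₁ − √γ₂)² / max{(γ₁ + γ₂)/2, 1}². -/

import Mathlib

/-- The declaration probability function `f(μ, γ) = γμ/(1 + (γ − 1)μ)`. -/
noncomputable def declProb (μ γ : ℝ) : ℝ := γ * μ / (1 + (γ - 1) * μ)

/-- Kullback–Leibler divergence between `Bernoulli(p)` and `Bernoulli(q)`. -/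
noncomputable def klBernoulli (p q : ℝ) : ℝ :=
  p * Real.log (p / q) + (1 - p) * Real.log ((1 - p) / (1 - q))

/-!
Write `p = f(μ, γ₁)`, `q = f(μ, γ₂)` and `BC = √(pq) + √((1-p)(1-q))` for their Bhattacharyya
coefficient. Termwise, `log x ≤ x - 1` applied to `√(q/p)` gives `KL(p ‖ q) ≥ 2(1 - BC) ≥ 1 - BC²`.
With `Dᵢ = 1 + (γᵢ - 1)μ` one has `BC = (√(γ₁γ₂)μ + 1 - μ)/√(D₁D₂)`, whence
`1 - BC² = μ(1-μ)(√γ₁ - √γ₂)²/(D₁D₂)`. Finally `D₁D₂ ≤ ((D₁+D₂)/2)² ≤ max((γ₁+γ₂)/2, 1)²` and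
`κ/t ≤ min(μ, 1-μ) ≤ 2μ(1-μ)`.
-/

open Real Set

noncomputable def bhattacharyya (p q : ℝ) : ℝ := √(p * q) + √((1 - p) * (1 - q))

theorem two_mul_sub_sqrt_mul_le_mul_log_div {p q : ℝ} (hp : 0 < p) (hq : 0 < q) :
    2 * (p - √(p * q)) ≤ p * log (p / q) := by
  have hlog : log (p / q) = -2 * log √(q / p) := by
    rw [log_sqrt (by positivity), log_div hp.ne' hq.ne', log_div hq.ne' hp.ne']
    ring
  have hsqrt : p * √(q / p) = √(p * q) := by
    have : p * q = p ^ 2 * (q / p) := by field_simp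
    rw [this, sqrt_mul (sq_nonneg p), sqrt_sq hp.le]
  calc 2 * (p - √(p * q)) = 2 * (p * (1 - √(q / p))) := by rw [← hsqrt]; ring
    _ ≤ 2 * (p * -log √(q / p)) := by
        gcongr
        linarith [log_le_sub_one_of_pos (show 0 < √(q / p) by positivity)]
    _ = p * log (p / q) := by rw [hlog]; ring

theorem two_mul_one_sub_bhattacharyya_le_klBernoulli {p q : ℝ} (hp : p ∈ Ioo 0 1)
    (hq : q ∈ Ioo 0 1) : 2 * (1 - bhattacharyya p q) ≤ klBernoulli p q := by
  have h₁ := two_mul_sub_sqrt_mul_le_mul_log_div hp.1 hq.1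
  have h₂ := two_mul_sub_sqrt_mul_le_mul_log_div (sub_pos.2 hp.2) (sub_pos.2 hq.2)
  rw [bhattacharyya, klBernoulli]
  linarith

theorem one_sub_sq_le_two_mul_one_sub (x : ℝ) : 1 - x ^ 2 ≤ 2 * (1 - x) := by
  nlinarith [sq_nonneg (1 - x)]

section declProb

variable {μ γ γ₁ γ₂ : ℝ}

theorem one_add_sub_one_mul_pos (hγ : 0 < γ) (hμ : μ ∈ Icc 0 1) : 0 < 1 + (γ - 1) * μ := by
  rcases hμ.1.eq_or_lt with rfl | hμ₀
  · norm_num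
  · nlinarith [hμ.2]

theorem one_sub_declProb (hD : 1 + (γ - 1) * μ ≠ 0) :
    1 - declProb μ γ = (1 - μ) / (1 + (γ - 1) * μ) := by
  rw [declProb, eq_div_iff hD, sub_mul, div_mul_cancel₀ _ hD]
  ring

theorem declProb_mem_Ioo (hγ : 0 < γ) (hμ : μ ∈ Ioo 0 1) : declProb μ γ ∈ Ioo 0 1 := by
  have hD := one_add_sub_one_mul_pos hγ (Ioo_subset_Icc_self hμ)
  refine ⟨div_pos (mul_pos hγ hμ.1) hD, sub_pos.1 ?_⟩
  rw [one_sub_declProb hD.ne']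
  exact div_pos (sub_pos.2 hμ.2) hD

theorem bhattacharyya_declProb (hγ₁ : 0 < γ₁) (hγ₂ : 0 < γ₂) (hμ : μ ∈ Icc 0 1) :
    bhattacharyya (declProb μ γ₁) (declProb μ γ₂) =
      (√γ₁ * √γ₂ * μ + (1 - μ)) / √((1 + (γ₁ - 1) * μ) * (1 + (γ₂ - 1) * μ)) := by
  have hD₁ := one_add_sub_one_mul_pos hγ₁ hμ
  have hD₂ := one_add_sub_one_mul_pos hγ₂ hμ
  have hμ' : 0 ≤ 1 - μ := sub_nonneg.2 hμ.2
  have hprod : declProb μ γ₁ * declProb μ γ₂ =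
      (√γ₁ * √γ₂ * μ) ^ 2 / ((1 + (γ₁ - 1) * μ) * (1 + (γ₂ - 1) * μ)) := by
    rw [declProb, declProb, mul_pow, mul_pow, sq_sqrt hγ₁.le, sq_sqrt hγ₂.le]
    field_simp
  have hprod' : (1 - declProb μ γ₁) * (1 - declProb μ γ₂) =
      (1 - μ) ^ 2 / ((1 + (γ₁ - 1) * μ) * (1 + (γ₂ - 1) * μ)) := by
    rw [one_sub_declProb hD₁.ne', one_sub_declProb hD₂.ne']
    field_simp
  rw [bhattacharyya, hprod, hprod', sqrt_div' _ (by positivity), sqrt_div' _ (by positivity),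
    sqrt_sq (by have := hμ.1; positivity), sqrt_sq hμ', add_div]

theorem one_sub_sq_bhattacharyya_declProb (hγ₁ : 0 < γ₁) (hγ₂ : 0 < γ₂) (hμ : μ ∈ Icc 0 1) :
    1 - bhattacharyya (declProb μ γ₁) (declProb μ γ₂) ^ 2 =
      μ * (1 - μ) * (√γ₁ - √γ₂) ^ 2 / ((1 + (γ₁ - 1) * μ) * (1 + (γ₂ - 1) * μ)) := by
  have hD := mul_pos (one_add_sub_one_mul_pos hγ₁ hμ) (one_add_sub_one_mul_pos hγ₂ hμ)
  rw [bhattacharyya_declProb hγ₁ hγ₂ hμ, div_pow, sq_sqrt hD.le, one_sub_div hD.ne']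
  congr 1
  linear_combination (μ * (1 + (γ₂ - 1) * μ)) * (sq_sqrt hγ₁.le).symm +
    (μ * (1 + (√γ₁ ^ 2 - 1) * μ)) * (sq_sqrt hγ₂.le).symm

end declProb

theorem one_add_sub_one_mul_mul_le_max_sq {γ₁ γ₂ μ : ℝ} (hγ₁ : 0 ≤ γ₁) (hγ₂ : 0 ≤ γ₂)
    (hμ : μ ∈ Icc 0 1) :
    (1 + (γ₁ - 1) * μ) * (1 + (γ₂ - 1) * μ) ≤ max ((γ₁ + γ₂) / 2) 1 ^ 2 := by
  set M := max ((γ₁ + γ₂) / 2) 1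
  have hmean : 1 + ((γ₁ + γ₂) / 2 - 1) * μ ≤ M := by
    nlinarith [le_max_left ((γ₁ + γ₂) / 2) 1, le_max_right ((γ₁ + γ₂) / 2) 1, hμ.1, hμ.2]
  have hmean_nonneg : 0 ≤ 1 + ((γ₁ + γ₂) / 2 - 1) * μ := by nlinarith [hμ.1, hμ.2]
  calc (1 + (γ₁ - 1) * μ) * (1 + (γ₂ - 1) * μ) ≤ (1 + ((γ₁ + γ₂) / 2 - 1) * μ) ^ 2 := by
        nlinarith [sq_nonneg ((γ₁ - γ₂) * μ)]
    _ ≤ M ^ 2 := pow_le_pow_left₀ hmean_nonneg hmean 2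

theorem min_le_two_mul_mul_one_sub {μ : ℝ} (hμ : μ ∈ Icc 0 1) :
    min μ (1 - μ) ≤ 2 * μ * (1 - μ) := by
  rcases le_total μ (1 / 2) with h | h
  · nlinarith [min_le_left μ (1 - μ), hμ.1]
  · nlinarith [min_le_right μ (1 - μ), hμ.2]

theorem klBernoulli_declProb_kappa_over_t_bound_general
    (γ₁ γ₂ κ : ℝ) (t : ℕ) (hγ₁ : 0 < γ₁) (hγ₂ : 0 < γ₂)
    (μ : ℝ) (hμ : μ ∈ Set.Ioo (0 : ℝ) 1)
    (hμt : κ / (t : ℝ) ≤ min μ (1 - μ)) :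
    (1 / 2) * (Real.sqrt γ₁ - Real.sqrt γ₂) ^ 2 / max ((γ₁ + γ₂) / 2) 1 ^ 2 * (κ / (t : ℝ))
      ≤ klBernoulli (declProb μ γ₁) (declProb μ γ₂) := by
  have hμc : μ ∈ Icc 0 1 := Ioo_subset_Icc_self hμ
  have hD := mul_pos (one_add_sub_one_mul_pos hγ₁ hμc) (one_add_sub_one_mul_pos hγ₂ hμc)
  have hvar : 0 ≤ μ * (1 - μ) * (√γ₁ - √γ₂) ^ 2 :=
    mul_nonneg (mul_nonneg hμc.1 (sub_nonneg.2 hμc.2)) (sq_nonneg _)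
  set BC := bhattacharyya (declProb μ γ₁) (declProb μ γ₂)
  calc (1 / 2) * (√γ₁ - √γ₂) ^ 2 / max ((γ₁ + γ₂) / 2) 1 ^ 2 * (κ / t)
      ≤ (1 / 2) * (√γ₁ - √γ₂) ^ 2 / max ((γ₁ + γ₂) / 2) 1 ^ 2 * (2 * μ * (1 - μ)) := by
        gcongr
        exact hμt.trans (min_le_two_mul_mul_one_sub hμc)
    _ = μ * (1 - μ) * (√γ₁ - √γ₂) ^ 2 / max ((γ₁ + γ₂) / 2) 1 ^ 2 := by ring
    _ ≤ μ * (1 - μ) * (√γ₁ - √γ₂) ^ 2 / ((1 + (γ₁ - 1) * μ) * (1 + (γ₂ - 1) * μ)) :=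
        div_le_div_of_nonneg_left hvar hD (one_add_sub_one_mul_mul_le_max_sq hγ₁.le hγ₂.le hμc)
    _ = 1 - BC ^ 2 := (one_sub_sq_bhattacharyya_declProb hγ₁ hγ₂ hμc).symm
    _ ≤ 2 * (1 - BC) := one_sub_sq_le_two_mul_one_sub BC
    _ ≤ klBernoulli (declProb μ γ₁) (declProb μ γ₂) :=
        two_mul_one_sub_bhattacharyya_le_klBernoulli (declProb_mem_Ioo hγ₁ hμ)
          (declProb_mem_Ioo hγ₂ hμ)

/-- Let `γ₁, γ₂ > 0` with `γ₁ ≠ γ₂`, let `κ > 0` and `t ≥ 1`, and let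
`μ ∈ (0, 1)` satisfy `min{μ, 1 − μ} ≥ κ/t`. Then
`D(f(μ, γ₁) ‖ f(μ, γ₂)) ≥ c₀ · κ/t`, with
`c₀ = (1/2)·(√γ₁ − √γ₂)²/max{(γ₁ + γ₂)/2, 1}²`. -/
theorem klBernoulli_declProb_kappa_over_t_bound
    (γ₁ γ₂ κ : ℝ) (t : ℕ) (hγ₁ : 0 < γ₁) (hγ₂ : 0 < γ₂) (hne : γ₁ ≠ γ₂)
    (hκ : 0 < κ) (ht : 1 ≤ t) (μ : ℝ) (hμ : μ ∈ Set.Ioo (0 : ℝ) 1)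
    (hμt : κ / (t : ℝ) ≤ min μ (1 - μ)) :
    (1 / 2) * (Real.sqrt γ₁ - Real.sqrt γ₂) ^ 2 / max ((γ₁ + γ₂) / 2) 1 ^ 2 * (κ / (t : ℝ))
      ≤ klBernoulli (declProb μ γ₁) (declProb μ γ₂) :=
  klBernoulli_declProb_kappa_over_t_bound_general γ₁ γ₂ κ t hγ₁ hγ₂ μ hμ hμt
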